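/- Let 1 ≤ p < ∞. The function I_p is finite exactly on (0,1), satisfies I_p(e^{m_p}) = 0, and lim_{θ→0+} I_p(θ) = lim_{θ→1−} I_p(θ) = +∞. -/

import Mathlib

open MeasureTheory Filter Set

noncomputable section

/-- The digamma function `ψ = Γ'/Γ`. -/
def digammaFn (x : ℝ) : ℝ := deriv Real.Gamma x / Real.Gamma x

/-- `H(x) = ψ(x) - log x`. -/
def Hfun (x : ℝ) : ℝ := digammaFn x - Real.log x

/-- The inverse `H⁻¹` of the increasing bijection `H : (0,∞) → (-∞,0)`. -/
def Hinv (y : ℝ) : ℝ := Function.invFunOn Hfun (Ioi 0) y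

/-- The constant `m_p = (1/p)(ψ(1/p) + log p)`. -/
def mConst (p : ℝ) : ℝ := (1/p) * (digammaFn (1/p) + Real.log p)

/-- `G_p(θ) = H⁻¹(p log θ)`. -/
def Gfun (p θ : ℝ) : ℝ := Hinv (p * Real.log θ)

/-- The rate function
`I_p(θ) = [p G_p(θ) - 1] log θ + G_p(θ)[log G_p(θ) - 1] - log Γ(G_p(θ))
            + (1/p)(1 + log p) + log Γ(1/p)`. -/
def ratefn (p θ : ℝ) : ℝ :=
  (p * Gfun p θ - 1) * Real.log θ + Gfun p θ * (Real.log (Gfun p θ) - 1)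
    - Real.log (Real.Gamma (Gfun p θ)) + (1/p) * (1 + Real.log p)
    + Real.log (Real.Gamma (1/p))

/-- The rate function `I_p`, extended by `+∞` outside `(0,1)` (with values in `EReal`). -/
def ratefnExt (p : ℝ) (θ : ℝ) : EReal :=
  if θ ∈ Ioo (0:ℝ) 1 then ((ratefn p θ : ℝ) : EReal) else ⊤

/-!
Write `g = G_p(θ)`. Since `H(g) = p log θ`, `I_p(θ)` is an explicit function of `g`, and
`θ → 0⁺`, `θ → 1⁻` correspond to `g → 0⁺`, `g → ∞`. Everything rests on the log-convexity of `Γ`.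
Comparing `ψ` with the slopes of `log Γ` on `[x, x + 1]` gives `-1/x ≤ H(x) ≤ 0`, so `H → 0` at
`∞`. The increment `H(x + 1) - H(x) = 1/x - log (1 + 1/x)` is strictly decreasing, so for `a < b`
the gaps `H(b + n) - H(a + n)` decrease strictly to `0`, and `H` is strictly increasing. Being the
derivative of `log Γ(x) - x log x + x`, `H` has the intermediate value property, hence maps `(0, ∞)`
onto `(-∞, 0)`. Near `g = 0` the term `-H(g)/p ≥ (1/g + log g - log 2)/p` dominates `I_p`; for
large `g` the Stirling bound `log Γ(g) ≤ (g - 1/2) log g - g + 2` leaves at least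
`(log g)/2 - O(1)`.
-/

open Real
open scoped Nat

namespace Real

lemma log_Gamma_add_one {x : ℝ} (hx : 0 < x) :
    log (Gamma (x + 1)) = log (Gamma x) + log x := by
  rw [Gamma_add_one hx.ne', log_mul hx.ne' (Gamma_pos_of_pos hx).ne', add_comm]

lemma log_Gamma_add_one_nonpos {x : ℝ} (h0 : 0 ≤ x) (h1 : x ≤ 1) : log (Gamma (x + 1)) ≤ 0 := by
  have h := convexOn_log_Gamma.2 (mem_Ioi.2 one_pos) (mem_Ioi.2 two_pos) (sub_nonneg.2 h1) h0
    (sub_add_cancel 1 x)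
  simp only [smul_eq_mul, Function.comp_apply, Gamma_one, Gamma_two, log_one, mul_zero,
    add_zero] at h
  rwa [show (1 - x) * 1 + x * 2 = x + 1 by ring] at h

lemma log_factorial_le {n : ℕ} (hn : n ≠ 0) :
    log n ! ≤ n * log n - n + log n / 2 + 1 := by
  have hseq : Stirling.stirlingSeq n ≤ exp 1 / √2 := by
    obtain ⟨m, rfl⟩ := Nat.exists_eq_succ_of_ne_zero hn
    simpa [Stirling.stirlingSeq_one] using Stirling.stirlingSeq'_antitone (Nat.zero_le m)
  have hpos : (0 : ℝ) < n := Nat.cast_pos.2 (Nat.pos_of_ne_zero hn)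
  have hfac : (n ! : ℝ) ≤ exp 1 * √n * (n / exp 1) ^ n := by
    rw [Stirling.stirlingSeq, div_le_iff₀ (by positivity)] at hseq
    refine hseq.trans (le_of_eq ?_)
    rw [sqrt_mul zero_le_two]
    field_simp
  calc log n ! ≤ log (exp 1 * √n * (n / exp 1) ^ n) :=
        log_le_log (by positivity) hfac
    _ = n * log n - n + log n / 2 + 1 := by
        rw [log_mul (by positivity) (by positivity), log_mul (by positivity) (by positivity),
          log_exp, log_sqrt hpos.le, log_pow, log_div hpos.ne' (exp_pos 1).ne', log_exp]
        ring

lemma log_Gamma_le {x : ℝ} (hx : 1 ≤ x) : log (Gamma x) ≤ (x - 1/2) * log x - x + 2 := by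
  set n := ⌊x⌋₊
  have hn : n ≠ 0 := (Nat.floor_pos.2 hx).ne'
  have hn0 : (0 : ℝ) < n := Nat.cast_pos.2 (Nat.pos_of_ne_zero hn)
  have hnx : (n : ℝ) ≤ x := Nat.floor_le (by linarith)
  have hxn : x < n + 1 := Nat.lt_floor_add_one x
  have hinterp : log (Gamma x) ≤ log (Gamma n) + (x - n) * log n := by
    have h := convexOn_log_Gamma.2 (mem_Ioi.2 hn0) (mem_Ioi.2 (by linarith : (0 : ℝ) < n + 1))
      (by linarith : 0 ≤ 1 - (x - n)) (sub_nonneg.2 hnx) (sub_add_cancel 1 (x - n))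
    simp only [smul_eq_mul, Function.comp_apply, log_Gamma_add_one hn0] at h
    rw [show (1 - (x - n)) * n + (x - n) * (n + 1) = x by ring] at h
    linarith
  have hfac : log (Gamma n) = log n ! - log n := by
    rw [← Gamma_nat_eq_factorial, log_Gamma_add_one hn0]
    ring
  have hlog : (x - 1/2) * log n ≤ (x - 1/2) * log x :=
    mul_le_mul_of_nonneg_left (log_le_log hn0 hnx) (by linarith)
  linear_combination hinterp + hfac + log_factorial_le hn + hlog + hxn

end Real

lemma hasDerivAt_log_Gamma {x : ℝ} (hx : 0 < x) :
    HasDerivAt (fun y => log (Gamma y)) (digammaFn x) x :=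
  ((differentiableAt_Gamma fun m => by linarith [(Nat.cast_nonneg m : (0 : ℝ) ≤ m)]).hasDerivAt.log
    (Gamma_pos_of_pos hx).ne')

lemma digammaFn_add_one {x : ℝ} (hx : 0 < x) : digammaFn (x + 1) = digammaFn x + x⁻¹ := by
  have hshift : HasDerivAt (fun y => log (Gamma (y + 1))) (digammaFn (x + 1)) x := by
    simpa using (hasDerivAt_log_Gamma (by linarith : 0 < x + 1)).comp_add_const x 1
  have hsum : HasDerivAt (fun y => log (Gamma y) + log y) (digammaFn x + x⁻¹) x :=
    (hasDerivAt_log_Gamma hx).add (hasDerivAt_log hx.ne')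
  refine hshift.unique (hsum.congr_of_eventuallyEq ?_)
  filter_upwards [Ioi_mem_nhds hx] with y hy using log_Gamma_add_one hy

lemma digammaFn_le_log {x : ℝ} (hx : 0 < x) : digammaFn x ≤ log x := by
  have h := convexOn_log_Gamma.le_slope_of_hasDerivAt (mem_Ioi.2 hx)
    (mem_Ioi.2 (by linarith : 0 < x + 1)) (lt_add_one x) (hasDerivAt_log_Gamma hx)
  simpa [slope_def_field, log_Gamma_add_one hx] using h

lemma log_le_digammaFn_add_one {x : ℝ} (hx : 0 < x) : log x ≤ digammaFn (x + 1) := by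
  have h := convexOn_log_Gamma.slope_le_of_hasDerivAt (mem_Ioi.2 hx)
    (mem_Ioi.2 (by linarith : 0 < x + 1)) (lt_add_one x) (hasDerivAt_log_Gamma (by linarith))
  simpa [slope_def_field, log_Gamma_add_one hx] using h

lemma Hfun_nonpos {x : ℝ} (hx : 0 < x) : Hfun x ≤ 0 :=
  sub_nonpos.2 (digammaFn_le_log hx)

lemma neg_inv_le_Hfun {x : ℝ} (hx : 0 < x) : -x⁻¹ ≤ Hfun x := by
  have h := log_le_digammaFn_add_one hx
  rw [digammaFn_add_one hx] at h
  unfold Hfun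
  linarith

lemma Hfun_add_one {x : ℝ} (hx : 0 < x) :
    Hfun (x + 1) = Hfun x + (x⁻¹ + log x - log (x + 1)) := by
  unfold Hfun
  rw [digammaFn_add_one hx]
  ring

lemma strictAntiOn_inv_add_log_sub_log_add_one :
    StrictAntiOn (fun x : ℝ => x⁻¹ + log x - log (x + 1)) (Ioi 0) := by
  have hderiv : ∀ x : ℝ, 0 < x → HasDerivAt (fun x : ℝ => x⁻¹ + log x - log (x + 1))
      (-(x ^ 2)⁻¹ + x⁻¹ - (x + 1)⁻¹) x := fun x hx =>
    ((hasDerivAt_inv hx.ne').add (hasDerivAt_log hx.ne')).sub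
      (by simpa using ((hasDerivAt_id x).add_const 1).log (by simp; linarith))
  refine strictAntiOn_of_deriv_neg (convex_Ioi 0)
    (fun x hx => (hderiv x hx).continuousAt.continuousWithinAt) fun x hx => ?_
  rw [interior_Ioi, mem_Ioi] at hx
  rw [(hderiv x hx).deriv]
  have : -(x ^ 2)⁻¹ + x⁻¹ - (x + 1)⁻¹ = -(x ^ 2 * (x + 1))⁻¹ := by
    field_simp
    ring
  rw [this, neg_lt_zero]
  positivity

lemma tendsto_Hfun_atTop : Tendsto Hfun atTop (nhds 0) := by
  have hinv : Tendsto (fun x : ℝ => -x⁻¹) atTop (nhds 0) := by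
    simpa using (tendsto_inv_atTop_zero (𝕜 := ℝ)).neg
  refine tendsto_of_tendsto_of_tendsto_of_le_of_le' hinv tendsto_const_nhds ?_ ?_
  · filter_upwards [eventually_gt_atTop 0] with x hx using neg_inv_le_Hfun hx
  · filter_upwards [eventually_gt_atTop 0] with x hx using Hfun_nonpos hx

lemma Hfun_strictMonoOn : StrictMonoOn Hfun (Ioi 0) := by
  intro a (ha : 0 < a) b (hb : 0 < b) hab
  set gap : ℕ → ℝ := fun n => Hfun (b + n) - Hfun (a + n)
  have hanti : StrictAnti gap := strictAnti_nat_of_succ_lt fun n => by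
    have han : 0 < a + n := by positivity
    have hbn : 0 < b + n := by positivity
    have := strictAntiOn_inv_add_log_sub_log_add_one (mem_Ioi.2 han) (mem_Ioi.2 hbn)
      (by linarith)
    simp only [gap, Nat.cast_succ, ← add_assoc, Hfun_add_one han, Hfun_add_one hbn]
    linarith
  have hlim : Tendsto gap atTop (nhds 0) := by
    have hshift : ∀ c : ℝ, Tendsto (fun n : ℕ => c + n) atTop atTop := fun c =>
      tendsto_atTop_add_const_left _ c tendsto_natCast_atTop_atTop
    simpa using (tendsto_Hfun_atTop.comp (hshift b)).sub (tendsto_Hfun_atTop.comp (hshift a))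
  have hpos : 0 < gap 0 := (hanti.antitone.le_of_tendsto hlim 1).trans_lt (hanti zero_lt_one)
  simpa [gap] using hpos

lemma Hfun_neg {x : ℝ} (hx : 0 < x) : Hfun x < 0 :=
  (Hfun_strictMonoOn hx (mem_Ioi.2 (by linarith : 0 < x + 1)) (lt_add_one x)).trans_le
    (Hfun_nonpos (by linarith))

lemma tendsto_mul_inv_add_mul_log_nhdsGT_zero {a : ℝ} (ha : 0 < a) (b : ℝ) :
    Tendsto (fun x => a * x⁻¹ + b * log x) (nhdsWithin 0 (Ioi 0)) atTop := by
  have hnum : Tendsto (fun x => a + b * (x * log x)) (nhdsWithin 0 (Ioi 0)) (nhds a) := by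
    have h := ((continuous_mul_log.tendsto 0).const_mul b).const_add a
    simpa using h.mono_left nhdsWithin_le_nhds
  refine (hnum.pos_mul_atTop ha tendsto_inv_nhdsGT_zero).congr' ?_
  filter_upwards [self_mem_nhdsWithin] with x (hx : 0 < x)
  field_simp

lemma tendsto_Hfun_nhdsGT_zero : Tendsto Hfun (nhdsWithin 0 (Ioi 0)) atBot := by
  have hbound : Tendsto (fun x => -(1 * x⁻¹ + 1 * log x) + log 2) (nhdsWithin 0 (Ioi 0)) atBot :=
    tendsto_atBot_add_const_right _ _
      (tendsto_neg_atTop_atBot.comp (tendsto_mul_inv_add_mul_log_nhdsGT_zero one_pos 1))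
  refine tendsto_atBot_mono' _ ?_ hbound
  filter_upwards [Ioo_mem_nhdsGT one_pos] with x ⟨hx0, hx1⟩
  have h := Hfun_add_one hx0
  have hlog : log (x + 1) ≤ log 2 := log_le_log (by linarith) (by linarith)
  linarith [Hfun_nonpos (by linarith : 0 < x + 1)]

lemma ordConnected_image_Hfun : OrdConnected (Hfun '' Ioi 0) := by
  refine ordConnected_Ioi.image_hasDerivWithinAt
    (f := fun x => log (Gamma x) - x * log x + x) fun x (hx : 0 < x) => ?_
  have h := ((hasDerivAt_log_Gamma hx).sub (hasDerivAt_mul_log hx.ne')).add (hasDerivAt_id' x)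
  rw [show Hfun x = digammaFn x - (log x + 1) + 1 by unfold Hfun; ring]
  exact h.hasDerivWithinAt

lemma Hfun_bijOn : BijOn Hfun (Ioi 0) (Iio 0) := by
  refine ⟨fun x hx => Hfun_neg hx, Hfun_strictMonoOn.injOn, fun y (hy : y < 0) => ?_⟩
  obtain ⟨x₁, hx₁y, hx₁⟩ :=
    ((tendsto_Hfun_nhdsGT_zero.eventually (eventually_le_atBot y)).and
      self_mem_nhdsWithin).exists
  have hx₂ : 0 < -y⁻¹ := neg_pos.2 (inv_lt_zero.2 hy)
  have hyx₂ : y ≤ Hfun (-y⁻¹) := by simpa using neg_inv_le_Hfun hx₂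
  exact ordConnected_image_Hfun.out ⟨x₁, hx₁, rfl⟩ ⟨_, hx₂, rfl⟩ ⟨hx₁y, hyx₂⟩

lemma Hinv_pos {y : ℝ} (hy : y < 0) : 0 < Hinv y :=
  Hfun_bijOn.surjOn.mapsTo_invFunOn hy

lemma Hfun_Hinv {y : ℝ} (hy : y < 0) : Hfun (Hinv y) = y :=
  Hfun_bijOn.surjOn.rightInvOn_invFunOn hy

lemma Hinv_Hfun {x : ℝ} (hx : 0 < x) : Hinv (Hfun x) = x :=
  Hfun_bijOn.injOn.leftInvOn_invFunOn hx

lemma Hinv_lt_iff {x y : ℝ} (hx : 0 < x) (hy : y < 0) : Hinv y < x ↔ y < Hfun x := by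
  conv_rhs => rw [← Hfun_Hinv hy]
  exact (Hfun_strictMonoOn.lt_iff_lt (Hinv_pos hy) hx).symm

lemma tendsto_Hinv_atBot : Tendsto Hinv atBot (nhdsWithin 0 (Ioi 0)) := by
  have hpos : ∀ᶠ y in atBot, 0 < Hinv y := by
    filter_upwards [eventually_lt_atBot 0] with y hy using Hinv_pos hy
  refine tendsto_nhdsWithin_iff.2 ⟨tendsto_order.2 ⟨fun a ha => ?_, fun a ha => ?_⟩, hpos⟩
  · filter_upwards [hpos] with y hy using ha.trans hy
  · filter_upwards [eventually_lt_atBot (Hfun a)] with y hy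
    exact (Hinv_lt_iff ha (hy.trans (Hfun_neg ha))).2 hy

lemma tendsto_Hinv_nhdsLT_zero : Tendsto Hinv (nhdsWithin 0 (Iio 0)) atTop := by
  refine tendsto_atTop.2 fun M => ?_
  have hM : 0 < max M 1 := lt_max_of_lt_right one_pos
  filter_upwards [Ioo_mem_nhdsLT (Hfun_neg hM)] with y ⟨hMy, hy⟩
  exact (le_max_left M 1).trans (not_lt.1 fun h => ((Hinv_lt_iff hM hy).1 h).not_gt hMy)

/-- `I_p(θ)` as a function of `g = G_p(θ)`, eliminating `log θ = H(g) / p`. -/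
def ratefnOfG (p g : ℝ) : ℝ :=
  (g - 1/p) * Hfun g + g * (log g - 1) - log (Gamma g) + (1/p) * (1 + log p)
    + log (Gamma (1/p))

section RateFunction

variable {p : ℝ}

lemma Hfun_Gfun (hp : 0 < p) {θ : ℝ} (hθ : θ ∈ Ioo 0 1) : Hfun (Gfun p θ) = p * log θ :=
  Hfun_Hinv (mul_neg_of_pos_of_neg hp (log_neg hθ.1 hθ.2))

lemma ratefn_eq_ratefnOfG (hp : 0 < p) {θ : ℝ} (hθ : θ ∈ Ioo 0 1) :
    ratefn p θ = ratefnOfG p (Gfun p θ) := by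
  unfold ratefn ratefnOfG
  rw [Hfun_Gfun hp hθ]
  field_simp

lemma Gfun_exp_mConst (hp : 0 < p) : Gfun p (exp (mConst p)) = 1/p := by
  have h : p * mConst p = Hfun (1/p) := by
    unfold mConst Hfun
    rw [one_div, log_inv]
    field_simp
    ring
  rw [Gfun, log_exp, h, Hinv_Hfun (by positivity)]

lemma ratefn_exp_mConst (hp : 0 < p) : ratefn p (exp (mConst p)) = 0 := by
  rw [ratefn, Gfun_exp_mConst hp, one_div, log_inv]
  field_simp
  ring

lemma tendsto_Gfun_nhdsGT_zero (hp : 0 < p) :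
    Tendsto (Gfun p) (nhdsWithin 0 (Ioi 0)) (nhdsWithin 0 (Ioi 0)) :=
  tendsto_Hinv_atBot.comp (tendsto_log_nhdsGT_zero.const_mul_atBot hp)

lemma tendsto_Gfun_nhdsLT_one (hp : 0 < p) :
    Tendsto (Gfun p) (nhdsWithin 1 (Iio 1)) atTop := by
  refine tendsto_Hinv_nhdsLT_zero.comp (tendsto_nhdsWithin_iff.2 ⟨?_, ?_⟩)
  · simpa using ((continuousAt_log one_ne_zero).const_mul p).tendsto.mono_left
      nhdsWithin_le_nhds
  · filter_upwards [Ioo_mem_nhdsLT zero_lt_one] with θ hθ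
    exact mul_neg_of_pos_of_neg hp (log_neg hθ.1 hθ.2)

lemma neg_one_le_mul_Hfun {g : ℝ} (hg : 0 < g) : -1 ≤ g * Hfun g := by
  have h := mul_le_mul_of_nonneg_left (neg_inv_le_Hfun hg) hg.le
  rwa [mul_neg, mul_inv_cancel₀ hg.ne'] at h

lemma tendsto_ratefnOfG_nhdsGT_zero (hp : 0 < p) :
    Tendsto (ratefnOfG p) (nhdsWithin 0 (Ioi 0)) atTop := by
  refine tendsto_atTop_mono' _ ?_ (tendsto_atTop_add_const_right _
    ((1/p) * (1 + log p) + log (Gamma (1/p)) - 2 - log 2 / p)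
    (tendsto_mul_inv_add_mul_log_nhdsGT_zero (one_div_pos.2 hp) (1/p + 1)))
  filter_upwards [Ioo_mem_nhdsGT one_pos] with g ⟨hg0, hg1⟩
  have hH : g⁻¹ + log g - log 2 ≤ -Hfun g := by
    have hlog : log (g + 1) ≤ log 2 := log_le_log (by linarith) (by linarith)
    linarith [Hfun_add_one hg0, Hfun_nonpos (by linarith : 0 < g + 1)]
  have hHp : (1/p) * (g⁻¹ + log g - log 2) ≤ (1/p) * (-Hfun g) :=
    mul_le_mul_of_nonneg_left hH (one_div_pos.2 hp).le
  have hmullog : -1 ≤ g * (log g - 1) := by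
    have := mul_le_mul_of_nonneg_left (one_sub_inv_le_log_of_pos hg0) hg0.le
    rw [mul_sub, mul_inv_cancel₀ hg0.ne'] at this
    linarith
  have hΓ : log (Gamma g) ≤ -log g := by
    linarith [log_Gamma_add_one hg0, log_Gamma_add_one_nonpos hg0.le hg1.le]
  unfold ratefnOfG
  linear_combination neg_one_le_mul_Hfun hg0 + hHp + hmullog + hΓ

lemma tendsto_ratefnOfG_atTop (hp : 0 < p) : Tendsto (ratefnOfG p) atTop atTop := by
  refine tendsto_atTop_mono' _ ?_ (tendsto_atTop_add_const_right _
    ((1/p) * (1 + log p) + log (Gamma (1/p)) - 3) (tendsto_log_atTop.const_mul_atTop one_half_pos))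
  filter_upwards [eventually_ge_atTop 1] with g hg
  have hg0 : 0 < g := by linarith
  have hHp : 0 ≤ (1/p) * (-Hfun g) :=
    mul_nonneg (one_div_pos.2 hp).le (neg_nonneg.2 (Hfun_nonpos hg0))
  unfold ratefnOfG
  linear_combination neg_one_le_mul_Hfun hg0 + hHp + log_Gamma_le hg

end RateFunction

/-- `I_p` is finite exactly on `(0,1)`, `I_p(e^{m_p}) = 0`, and
`I_p(θ) → +∞` as `θ → 0⁺` and as `θ → 1⁻`. -/
theorem statement7 (p : ℝ) (hp : 1 ≤ p) :
    (∀ θ : ℝ, ratefnExt p θ ≠ ⊤ ↔ θ ∈ Ioo (0:ℝ) 1) ∧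
    ratefn p (Real.exp (mConst p)) = 0 ∧
    Tendsto (fun θ => ratefn p θ) (nhdsWithin 0 (Ioi 0)) atTop ∧
    Tendsto (fun θ => ratefn p θ) (nhdsWithin 1 (Iio 1)) atTop := by
  have hp0 : 0 < p := one_pos.trans_le hp
  refine ⟨fun θ => ?_, ratefn_exp_mConst hp0, ?_, ?_⟩
  · unfold ratefnExt
    split_ifs with h <;> simp [h]
  · refine ((tendsto_ratefnOfG_nhdsGT_zero hp0).comp (tendsto_Gfun_nhdsGT_zero hp0)).congr' ?_
    filter_upwards [Ioo_mem_nhdsGT one_pos] with θ hθ using (ratefn_eq_ratefnOfG hp0 hθ).symm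
  · refine ((tendsto_ratefnOfG_atTop hp0).comp (tendsto_Gfun_nhdsLT_one hp0)).congr' ?_
    filter_upwards [Ioo_mem_nhdsLT zero_lt_one] with θ hθ using (ratefn_eq_ratefnOfG hp0 hθ).symm
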